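/- Let X be a pre-Riesz space and let P : X → X be a linear projection (P ∘ P = P). Then P is a band projection if and only if both the range PX and the kernel ker P are projection bands in X. -/

import Mathlib

open Pointwise

/-- The class `OrderedSMul` as it stood in Mathlib (December 2024); it has since been removed. -/
class OrderedSMul (R M : Type*) [Semiring R] [PartialOrder R] [AddCommMonoid M] [PartialOrder M]
    [SMulWithZero R M] : Prop where
  protected smul_lt_smul_of_pos : ∀ {a b : M}, ∀ {c : R}, a < b → 0 < c → c • a < c • b
  protected lt_of_smul_lt_smul_of_pos : ∀ {a b : M}, ∀ {c : R}, c • a < c • b → 0 < c → a < b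

variable {X : Type*} [AddCommGroup X] [PartialOrder X] [IsOrderedAddMonoid X] [Module ℝ X] [OrderedSMul ℝ X]

/-- Two elements of an ordered vector space are disjoint if the sets `{x+y, -x-y}` and
`{x-y, y-x}` have the same set of upper bounds. -/
def UDisjoint (x y : X) : Prop :=
  upperBounds ({x + y, -x - y} : Set X) = upperBounds ({x - y, y - x} : Set X)

/-- The disjoint complement `S^⊥` of a set `S`. -/
def dComp (S : Set X) : Set X := {x : X | ∀ s ∈ S, UDisjoint x s}

/-- A band: a set equal to its double disjoint complement. -/
def IsBand (B : Set X) : Prop := B = dComp (dComp B)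

/-- A projection band: a band `B` with `B ∩ B^⊥ = {0}` and `B + B^⊥ = X`. -/
def IsProjBand (B : Set X) : Prop :=
  IsBand B ∧ B ∩ dComp B = {0} ∧ ∀ x : X, ∃ b ∈ B, ∃ c ∈ dComp B, x = b + c

/-- A positive linear operator. -/
def IsPosMap (T : X →ₗ[ℝ] X) : Prop := ∀ x : X, 0 ≤ x → 0 ≤ T x

/-- A band projection: a linear projection whose range is a projection band and whose
kernel is the disjoint complement of the range. -/
def IsBandProj (P : X →ₗ[ℝ] X) : Prop :=
  P ∘ₗ P = P ∧ IsProjBand (Set.range ⇑P) ∧ (LinearMap.ker P : Set X) = dComp (Set.range ⇑P)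

/-- A pre-Riesz space: for every nonempty finite `A ⊆ X` and every `x`, if the upper bounds
of `x + A` are contained in the upper bounds of `A`, then `x ≥ 0`. -/
def IsPreRiesz (X : Type*) [AddCommGroup X] [PartialOrder X] [IsOrderedAddMonoid X] [Module ℝ X]
    [OrderedSMul ℝ X] : Prop :=
  ∀ (A : Set X) (x : X), A.Finite → A.Nonempty →
    upperBounds ((x + ·) '' A) ⊆ upperBounds A → 0 ≤ x

/-!
The affine order automorphism `t ↦ 2t - x - z` carries `{x + z, 0}` and `{x, z}` onto the two
pairs in the definition of `x ⊥ z`, so `x ⊥ z` says that these have the same upper bounds.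
In this form, `x ⊥ z` and `0 ≤ x + z` give `0 ≤ x` and `0 ≤ z`, and in a pre-Riesz space
disjoint complements are closed under addition. Consequently two projection bands `B`, `K`
meeting only in `0` are disjoint: a positive `b ∈ B` splits along `K ⊕ K^⊥` into positive parts
`k + m`, and positivity of the splitting along `B ⊕ B^⊥` forces `k ∈ B ∩ K = 0`; every element
of `B` is a difference of positive ones. For `B = PX` and `K = ker P` this gives
`ker P ⊆ B^⊥`, and conversely `c ∈ B^⊥` has `Pc = c - (c - Pc) ∈ B ∩ B^⊥ = 0`.
-/

instance OrderedSMul.toPosSMulStrictMono {E : Type*} [AddCommGroup E] [PartialOrder E]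
    [Module ℝ E] [OrderedSMul ℝ E] : PosSMulStrictMono ℝ E :=
  ⟨fun _ hc _ _ hab => OrderedSMul.smul_lt_smul_of_pos hab hc⟩

lemma le_of_le_of_sub_eq {E : Type*} [AddCommGroup E] [PartialOrder E] [IsOrderedAddMonoid E]
    {a b c d : E} (h : c ≤ d) (e : d - c = b - a) : a ≤ b :=
  sub_nonneg.1 (e ▸ sub_nonneg.2 h)

lemma le_of_add_self_le_add_self {E : Type*} [AddCommGroup E] [PartialOrder E] [Module ℝ E]
    [OrderedSMul ℝ E] {a b : E} (h : a + a ≤ b + b) : a ≤ b := by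
  rw [← two_smul ℝ a, ← two_smul ℝ b] at h
  exact le_of_smul_le_smul_left h two_pos

lemma mem_upperBounds_pair {α : Type*} [Preorder α] {a b t : α} :
    t ∈ upperBounds ({a, b} : Set α) ↔ a ≤ t ∧ b ≤ t := by
  simp [upperBounds_insert]

theorem udisjoint_iff_forall_le {x z : X} :
    UDisjoint x z ↔ ∀ t, (x + z ≤ t ∧ 0 ≤ t ↔ x ≤ t ∧ z ≤ t) := by
  let φ : X ≃o X :=
    (OrderIso.smulRight (two_pos : (0 : ℝ) < 2)).trans (OrderIso.addRight (-(x + z)))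
  have hφ : ∀ t, φ t = (2 : ℝ) • t - (x + z) := fun t => (sub_eq_add_neg _ _).symm
  have h₁ : φ '' {x + z, 0} = {x + z, -x - z} := by
    rw [Set.image_pair, hφ, hφ, smul_zero, zero_sub, neg_add', two_smul, add_sub_cancel_right]
  have h₂ : φ '' {x, z} = {x - z, z - x} := by
    rw [Set.image_pair, hφ, hφ, show (2 : ℝ) • x - (x + z) = x - z by module,
      show (2 : ℝ) • z - (x + z) = z - x by module]
  rw [UDisjoint, ← h₁, ← h₂, φ.upperBounds_image, φ.upperBounds_image,
    (Set.image_injective.2 φ.injective).eq_iff, Set.ext_iff]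
  simp only [mem_upperBounds_pair]

theorem UDisjoint.add_le_and_nonneg_iff {x z : X} (h : UDisjoint x z) (t : X) :
    x + z ≤ t ∧ 0 ≤ t ↔ x ≤ t ∧ z ≤ t :=
  udisjoint_iff_forall_le.1 h t

namespace UDisjoint

variable {x y z : X}

theorem symm (h : UDisjoint x z) : UDisjoint z x :=
  udisjoint_iff_forall_le.2 fun t => by rw [add_comm, h.add_le_and_nonneg_iff, and_comm]

omit [IsOrderedAddMonoid X] [Module ℝ X] [OrderedSMul ℝ X] in
theorem neg_left (h : UDisjoint x z) : UDisjoint (-x) z := by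
  unfold UDisjoint at h ⊢
  rw [neg_neg, Set.pair_comm, ← sub_eq_neg_add, Set.pair_comm (-x - z), sub_neg_eq_add, add_comm z]
  exact h.symm

theorem neg_right (h : UDisjoint x z) : UDisjoint x (-z) :=
  h.symm.neg_left.symm

theorem neg (h : UDisjoint x z) : UDisjoint (-x) (-z) :=
  h.neg_left.neg_right

theorem eq_zero_of_self (h : UDisjoint x x) : x = 0 := by
  obtain ⟨hxx, hx⟩ := (h.add_le_and_nonneg_iff x).2 ⟨le_rfl, le_rfl⟩
  exact le_antisymm (by simpa using hxx) hx

theorem nonneg_of_add_nonneg (h : UDisjoint x z) (hxz : 0 ≤ x + z) : 0 ≤ x ∧ 0 ≤ z := by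
  obtain ⟨hx, hz⟩ := (h.add_le_and_nonneg_iff (x + z)).1 ⟨le_rfl, hxz⟩
  exact ⟨by simpa using hz, by simpa using hx⟩

end UDisjoint

theorem udisjoint_zero_left (z : X) : UDisjoint 0 z :=
  udisjoint_iff_forall_le.2 fun t => by rw [zero_add, and_comm]

theorem IsPreRiesz.nonneg_of_udisjoint (hX : IsPreRiesz X) {x y z t : X} (hxz : UDisjoint x z)
    (hyz : UDisjoint y z) (hxy : x + y ≤ t) (hz : z ≤ t) : 0 ≤ t := by
  refine hX {x + z, -(x + z), -(y + z)} t (Set.toFinite _) (Set.insert_nonempty _ _) fun w hw => ?_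
  simp only [Set.image_insert_eq, Set.image_singleton, mem_upperBounds, Set.mem_insert_iff,
    Set.mem_singleton_iff, forall_eq_or_imp, forall_eq] at hw ⊢
  obtain ⟨h₁, h₂, h₃⟩ := hw
  have hnx : -x ≤ w := le_trans (le_of_le_of_sub_eq hz (by abel)) h₂
  have hny : -y ≤ w := le_trans (le_of_le_of_sub_eq hz (by abel)) h₃
  have hzw : z ≤ w := le_of_add_self_le_add_self <|
    le_of_le_of_sub_eq (add_le_add (add_le_add hz h₁) hnx) (by abel)
  have hw0 : 0 ≤ w := ((hxz.neg_left.add_le_and_nonneg_iff w).2 ⟨hnx, hzw⟩).2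
  obtain ⟨hxw, hnz⟩ := (hxz.neg_right.add_le_and_nonneg_iff w).1
    ⟨le_trans (le_of_le_of_sub_eq hxy (by abel)) h₃, hw0⟩
  exact ⟨((hxz.add_le_and_nonneg_iff w).2 ⟨hxw, hzw⟩).1,
    le_of_le_of_sub_eq ((hxz.neg.add_le_and_nonneg_iff w).2 ⟨hnx, hnz⟩).1 (by abel),
    le_of_le_of_sub_eq ((hyz.neg.add_le_and_nonneg_iff w).2 ⟨hny, hnz⟩).1 (by abel)⟩

theorem UDisjoint.add (hX : IsPreRiesz X) {x y z : X} (hxz : UDisjoint x z) (hyz : UDisjoint y z) :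
    UDisjoint (x + y) z := by
  refine udisjoint_iff_forall_le.2 fun t => ⟨fun ⟨h, ht⟩ => ⟨?_, ?_⟩, fun ⟨hxy, hz⟩ => ⟨?_, ?_⟩⟩
  · exact sub_nonneg.1 <| hX.nonneg_of_udisjoint hxz.neg_left hyz.neg_left
      (le_of_le_of_sub_eq ht (by abel)) (le_of_le_of_sub_eq h (by abel))
  · exact sub_nonneg.1 <| hX.nonneg_of_udisjoint hxz.neg_right hyz.neg_right
      (le_of_le_of_sub_eq h (by abel)) (le_of_le_of_sub_eq ht (by abel))
  · exact sub_nonneg.1 <| hX.nonneg_of_udisjoint hxz.neg hyz.neg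
      (le_of_le_of_sub_eq hz (by abel)) (le_of_le_of_sub_eq hxy (by abel))
  · exact hX.nonneg_of_udisjoint hxz hyz hxy hz

theorem IsPreRiesz.exists_ge (hX : IsPreRiesz X) (x y : X) : ∃ u, x ≤ u ∧ y ≤ u := by
  by_contra! h
  -- with `{x, y}` unbounded above, the pre-Riesz condition holds vacuously for every element
  have hnonneg : ∀ w : X, 0 ≤ w := fun w =>
    hX {x, y} w (Set.toFinite _) (Set.insert_nonempty _ _) fun t ht => by
      simp only [Set.image_insert_eq, Set.image_singleton, mem_upperBounds_pair] at ht
      exact absurd (le_of_le_of_sub_eq ht.2 (by abel))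
        (h (t - w) (le_of_le_of_sub_eq ht.1 (by abel)))
  exact h 0 (neg_nonneg.1 (hnonneg _)) (neg_nonneg.1 (hnonneg _))

theorem zero_mem_dComp (S : Set X) : (0 : X) ∈ dComp S := fun s _ => udisjoint_zero_left s

omit [IsOrderedAddMonoid X] [Module ℝ X] [OrderedSMul ℝ X] in
theorem neg_mem_dComp {S : Set X} {x : X} (hx : x ∈ dComp S) : -x ∈ dComp S :=
  fun s hs => (hx s hs).neg_left

theorem add_mem_dComp (hX : IsPreRiesz X) {S : Set X} {x y : X} (hx : x ∈ dComp S)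
    (hy : y ∈ dComp S) : x + y ∈ dComp S :=
  fun s hs => (hx s hs).add hX (hy s hs)

theorem sub_mem_dComp (hX : IsPreRiesz X) {S : Set X} {x y : X} (hx : x ∈ dComp S)
    (hy : y ∈ dComp S) : x - y ∈ dComp S :=
  sub_eq_add_neg x y ▸ add_mem_dComp hX hx (neg_mem_dComp hy)

theorem subset_dComp_dComp (S : Set X) : S ⊆ dComp (dComp S) :=
  fun x hx _ hy => (hy x hx).symm

theorem dComp_dComp_dComp (S : Set X) : dComp (dComp (dComp S)) = dComp S :=
  Set.Subset.antisymm (fun _ hx s hs => hx s (subset_dComp_dComp S hs)) (subset_dComp_dComp _)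

theorem inter_dComp_subset (S : Set X) : S ∩ dComp S ⊆ {0} :=
  fun _ ⟨hs, hx⟩ => (hx _ hs).eq_zero_of_self

theorem IsBand.add_mem (hX : IsPreRiesz X) {B : Set X} (hB : IsBand B) {x y : X} (hx : x ∈ B)
    (hy : y ∈ B) : x + y ∈ B :=
  hB.symm.subset (add_mem_dComp hX (hB.subset hx) (hB.subset hy))

theorem IsBand.sub_mem (hX : IsPreRiesz X) {B : Set X} (hB : IsBand B) {x y : X} (hx : x ∈ B)
    (hy : y ∈ B) : x - y ∈ B :=
  hB.symm.subset (sub_mem_dComp hX (hB.subset hx) (hB.subset hy))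

theorem isProjBand_dComp {B : Set X} (hB : IsProjBand B) : IsProjBand (dComp B) := by
  refine ⟨(dComp_dComp_dComp B).symm, (inter_dComp_subset _).antisymm ?_, fun x => ?_⟩
  · exact Set.singleton_subset_iff.2 ⟨zero_mem_dComp _, zero_mem_dComp _⟩
  · obtain ⟨b, hb, c, hc, rfl⟩ := hB.2.2 x
    exact ⟨c, hc, b, subset_dComp_dComp B hb, add_comm b c⟩

namespace IsProjBand

variable {B K : Set X}

omit [IsOrderedAddMonoid X] [Module ℝ X] [OrderedSMul ℝ X] in
theorem udisjoint (hB : IsProjBand B) {b c : X} (hb : b ∈ B) (hc : c ∈ dComp B) :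
    UDisjoint b c :=
  hB.1.subset hb c hc

theorem mem_of_nonneg_of_add_mem (hX : IsPreRiesz X) (hB : IsProjBand B) {x y : X} (hx : 0 ≤ x)
    (hy : 0 ≤ y) (hxy : x + y ∈ B) : x ∈ B := by
  obtain ⟨b₁, hb₁, c₁, hc₁, rfl⟩ := hB.2.2 x
  obtain ⟨b₂, hb₂, c₂, hc₂, rfl⟩ := hB.2.2 y
  have hc₁_nonneg : 0 ≤ c₁ := ((hB.udisjoint hb₁ hc₁).nonneg_of_add_nonneg hx).2
  have hc₂_nonneg : 0 ≤ c₂ := ((hB.udisjoint hb₂ hc₂).nonneg_of_add_nonneg hy).2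
  have hcB : c₁ + c₂ ∈ B := by
    convert hB.1.sub_mem hX hxy (hB.1.add_mem hX hb₁ hb₂) using 1
    abel
  have hc : c₁ + c₂ = 0 := inter_dComp_subset B ⟨hcB, add_mem_dComp hX hc₁ hc₂⟩
  have : c₁ = 0 := le_antisymm (hc ▸ le_add_of_nonneg_right hc₂_nonneg) hc₁_nonneg
  rwa [this, add_zero]

theorem exists_nonneg_ge (hX : IsPreRiesz X) (hB : IsProjBand B) {b : X} (hb : b ∈ B) :
    ∃ p ∈ B, 0 ≤ p ∧ b ≤ p := by
  obtain ⟨u, hbu, hu⟩ := hX.exists_ge b 0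
  obtain ⟨p, hp, c, hc, rfl⟩ := hB.2.2 u
  refine ⟨p, hp, ((hB.udisjoint hp hc).nonneg_of_add_nonneg hu).1, sub_nonneg.1 ?_⟩
  have hpbc : 0 ≤ (p - b) + c := by simpa [sub_add_eq_add_sub] using hbu
  exact ((hB.udisjoint (hB.1.sub_mem hX hp hb) hc).nonneg_of_add_nonneg hpbc).1

theorem subset_dComp (hX : IsPreRiesz X) (hB : IsProjBand B) (hK : IsProjBand K)
    (hBK : B ∩ K ⊆ {0}) : B ⊆ dComp K := by
  have hpos : ∀ b ∈ B, 0 ≤ b → b ∈ dComp K := by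
    intro b hb hb0
    obtain ⟨k, hk, m, hm, rfl⟩ := hK.2.2 b
    obtain ⟨hk0, hm0⟩ := (hK.udisjoint hk hm).nonneg_of_add_nonneg hb0
    have : k = 0 := hBK ⟨hB.mem_of_nonneg_of_add_mem hX hk0 hm0 hb, hk⟩
    rwa [this, zero_add]
  intro b hb
  obtain ⟨p, hp, hp0, hbp⟩ := hB.exists_nonneg_ge hX hb
  simpa using sub_mem_dComp hX (hpos p hp hp0)
    (hpos (p - b) (hB.1.sub_mem hX hp hb) (sub_nonneg.2 hbp))

end IsProjBand

theorem ker_eq_dComp_range (hX : IsPreRiesz X) {P : X →ₗ[ℝ] X} (hP : P ∘ₗ P = P)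
    (hB : IsProjBand (Set.range P)) (hK : IsProjBand (LinearMap.ker P : Set X)) :
    (LinearMap.ker P : Set X) = dComp (Set.range P) := by
  have hPP : ∀ x, P (P x) = P x := LinearMap.congr_fun hP
  have hKB : (LinearMap.ker P : Set X) ⊆ dComp (Set.range P) := by
    refine hK.subset_dComp hX hB ?_
    rintro _ ⟨hw, w, rfl⟩
    exact (hPP w).symm.trans hw
  refine hKB.antisymm fun c hc => ?_
  have hk : c - P c ∈ (LinearMap.ker P : Set X) := by simp [hPP]
  have hPc : P c = 0 :=
    inter_dComp_subset (Set.range P) (a := P c)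
      ⟨⟨c, rfl⟩, by simpa using sub_mem_dComp hX hc (hKB hk)⟩
  rwa [hPc, sub_zero] at hk

/-- A linear projection is a band projection iff both its range and kernel are
projection bands. -/
theorem stmt_12 (hX : IsPreRiesz X) (P : X →ₗ[ℝ] X) (hP : P ∘ₗ P = P) :
    IsBandProj P ↔
      (IsProjBand (Set.range ⇑P) ∧ IsProjBand (LinearMap.ker P : Set X)) :=
  ⟨fun ⟨_, hB, hK⟩ => ⟨hB, hK ▸ isProjBand_dComp hB⟩,
    fun ⟨hB, hK⟩ => ⟨hP, hB, ker_eq_dComp_range hX hP hB hK⟩⟩
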